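/- arXiv:1702.02087 — 5 statements merged into one kernel-verified Lean document; each statement's English description precedes it below -/
import Mathlib

section
/- Let d ≥ 1 and let u : ℝ^d × ℝ → ℝ ∪ {−∞} be concave, real-valued on an open neighborhood of y₀ = (q₀, x₀), and satisfy u(q₀, x) > u(q₀, x₀) for every x > x₀. Then a vector p₀ ∈ ℝ^d satisfies u(q₀ + q, x₀ − ⟨q, p₀⟩) ≤ u(q₀, x₀) for all q ∈ ℝ^d if and only if there exists a supergradient (z_q, z_x) ∈ ∂u(y₀) such that z_x > 0 and p₀ = z_q / z_x (equivalently, z_x · p₀ = z_q). -/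
open Matrix

/-- Concavity for functions into `EReal` (`ℝ ∪ {−∞}`, never taking the value `⊤`),
with the extended-real conventions `0 · (−∞) = 0`. -/
def ConcaveE {E : Type*} [AddCommGroup E] [Module ℝ E] (u : E → EReal) : Prop :=
  ∀ a b : E, ∀ t : ℝ, 0 ≤ t → t ≤ 1 →
    (t : EReal) * u a + ((1 - t : ℝ) : EReal) * u b ≤ u (t • a + (1 - t) • b)

theorem marginal_utility_based_price_iff_supergradient
    (d : ℕ) (hd : 1 ≤ d) (u : (Fin d → ℝ) × ℝ → EReal)
    (q₀ : Fin d → ℝ) (x₀ : ℝ) (p₀ : Fin d → ℝ)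
    (hconc : ConcaveE u)
    (hntop : ∀ y, u y ≠ ⊤)
    (ε : ℝ) (hε : 0 < ε)
    (hfin : ∀ y ∈ Metric.ball ((q₀, x₀) : (Fin d → ℝ) × ℝ) ε, ∃ r : ℝ, u y = (r : EReal))
    (hincr : ∀ x : ℝ, x₀ < x → u (q₀, x₀) < u (q₀, x)) :
    (∀ q : Fin d → ℝ, u (q₀ + q, x₀ - q ⬝ᵥ p₀) ≤ u (q₀, x₀)) ↔
      ∃ z : (Fin d → ℝ) × ℝ,
        (∀ y : (Fin d → ℝ) × ℝ,
          u y ≤ u (q₀, x₀) + ((z.1 ⬝ᵥ (y.1 - q₀) + z.2 * (y.2 - x₀) : ℝ) : EReal)) ∧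
        0 < z.2 ∧ z.2 • p₀ = z.1 := by
  -- the affine "budget" functional
  set L : (Fin d → ℝ) × ℝ → ℝ := fun y => (y.1 - q₀) ⬝ᵥ p₀ + (y.2 - x₀) with hL
  have hLaff : ∀ (y y' : (Fin d → ℝ) × ℝ) (t : ℝ),
      L (t • y + (1 - t) • y') = t * L y + (1 - t) * L y' := by
    intro y y' t
    have h1 : (t • y + (1 - t) • y').1 = t • y.1 + (1 - t) • y'.1 := rfl
    have h2 : (t • y + (1 - t) • y').2 = t * y.2 + (1 - t) * y'.2 := rfl
    simp only [hL, h1, h2]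
    have hq : t • y.1 + (1 - t) • y'.1 - q₀ = t • (y.1 - q₀) + (1 - t) • (y'.1 - q₀) := by
      module
    rw [hq, add_dotProduct, smul_dotProduct, smul_dotProduct]
    simp only [smul_eq_mul]
    ring
  constructor
  · -- forward direction
    intro hbud
    -- real value at the center
    obtain ⟨u₀, hu₀⟩ := hfin (q₀, x₀) (Metric.mem_ball_self hε)
    -- budget hyperplane property
    have hH : ∀ y : (Fin d → ℝ) × ℝ, L y = 0 → u y ≤ (u₀ : EReal) := by
      intro y hy
      have hy2 : y.2 = x₀ - (y.1 - q₀) ⬝ᵥ p₀ := by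
        simp only [hL] at hy; linarith
      have : y = (q₀ + (y.1 - q₀), x₀ - (y.1 - q₀) ⬝ᵥ p₀) := by
        ext <;> simp [hy2]
      rw [this, ← hu₀]
      exact hbud (y.1 - q₀)
    -- the key two-point (cross-slope) inequality
    have hpair : ∀ (y y' : (Fin d → ℝ) × ℝ) (v v' : ℝ), u y = (v : EReal) →
        u y' = (v' : EReal) → 0 < L y → L y' < 0 →
        (-L y') * (v - u₀) ≤ (L y) * (u₀ - v') := by
      intro y y' v v' hv hv' hsy hsy'
      set s := L y with hs
      set s' := -L y' with hs'
      have hs0 : 0 < s := hsy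
      have hs'0 : 0 < s' := by simp [hs']; linarith
      set t := s' / (s + s') with ht
      have hss' : 0 < s + s' := by linarith
      have ht0 : 0 < t := div_pos hs'0 hss'
      have ht1 : t < 1 := by
        rw [ht, div_lt_one hss']; linarith
      have hcombo : L (t • y + (1 - t) • y') = 0 := by
        rw [hLaff]
        have : L y' = -s' := by simp [hs']
        rw [this, ← hs, ht]
        field_simp
        ring
      have h1 := hconc y y' t (le_of_lt ht0) (le_of_lt ht1)
      have h2 := hH _ hcombo
      rw [hv, hv'] at h1
      have h3 : ((t * v + (1 - t) * v' : ℝ) : EReal) ≤ (u₀ : EReal) := by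
        rw [EReal.coe_add, EReal.coe_mul, EReal.coe_mul]
        exact le_trans h1 h2
      have h4 : t * v + (1 - t) * v' ≤ u₀ := EReal.coe_le_coe_iff.mp h3
      rw [ht] at h4
      have h5 : s' * v + s * v' ≤ (s + s') * u₀ := by
        have := mul_le_mul_of_nonneg_left h4 (le_of_lt hss')
        have hne : s + s' ≠ 0 := ne_of_gt hss'
        field_simp at this
        nlinarith [this]
      nlinarith [h5]
    -- the set of slopes from above
    set S : Set ℝ := {r : ℝ | ∃ (y : (Fin d → ℝ) × ℝ) (v : ℝ),
      u y = (v : EReal) ∧ 0 < L y ∧ r = (v - u₀) / L y} with hS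
    -- a positive element of S
    have hball : ∀ s : ℝ, |s| < ε →
        ((q₀, x₀ + s) : (Fin d → ℝ) × ℝ) ∈ Metric.ball ((q₀, x₀) : (Fin d → ℝ) × ℝ) ε := by
      intro s hs
      rw [Metric.mem_ball, Prod.dist_eq]
      simp only [dist_self, Real.dist_eq]
      have h1 : x₀ + s - x₀ = s := by ring
      rw [h1, max_lt_iff]
      exact ⟨hε, hs⟩
    obtain ⟨vp, hvp⟩ := hfin (q₀, x₀ + ε / 2) (hball (ε / 2) (by
      rw [abs_of_pos (by linarith)]; linarith))
    have hvpgt : u₀ < vp := by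
      have := hincr (x₀ + ε / 2) (by linarith)
      rw [hu₀, hvp] at this
      exact EReal.coe_lt_coe_iff.mp this
    have hLp : L ((q₀, x₀ + ε / 2) : (Fin d → ℝ) × ℝ) = ε / 2 := by
      simp [hL]
    have hmemS : (vp - u₀) / (ε / 2) ∈ S := by
      refine ⟨(q₀, x₀ + ε / 2), vp, hvp, ?_, ?_⟩
      · rw [hLp]; linarith
      · rw [hLp]
    have hSne : S.Nonempty := ⟨_, hmemS⟩
    -- an upper bound for S
    obtain ⟨vm, hvm⟩ := by
      have := hfin (q₀, x₀ + (-(ε / 2))) (hball (-(ε / 2)) (by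
        rw [abs_of_neg (by linarith)]; linarith))
      have he : x₀ + (-(ε / 2)) = x₀ - ε / 2 := by ring
      rw [he] at this
      exact this
    have hLm : L ((q₀, x₀ - ε / 2) : (Fin d → ℝ) × ℝ) = -(ε / 2) := by
      show (q₀ - q₀) ⬝ᵥ p₀ + ((x₀ - ε / 2) - x₀) = -(ε / 2)
      rw [sub_self, zero_dotProduct]; ring
    have hSbdd : ∀ r ∈ S, r ≤ (u₀ - vm) / (ε / 2) := by
      rintro r ⟨y, v, hv, hLy, rfl⟩
      have := hpair y (q₀, x₀ - ε / 2) v vm hv hvm hLy (by rw [hLm]; linarith)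
      rw [hLm, neg_neg] at this
      rw [div_le_div_iff₀ hLy (by linarith)]
      nlinarith [this]
    set lam := sSup S with hlam
    have hlampos : 0 < lam := by
      have h1 : (vp - u₀) / (ε / 2) ≤ lam :=
        le_csSup ⟨_, fun r hr => hSbdd r hr⟩ hmemS
      have : 0 < (vp - u₀) / (ε / 2) := div_pos (by linarith) (by linarith)
      linarith
    -- the supergradient inequality for lam
    have hkey : ∀ y : (Fin d → ℝ) × ℝ, u y ≤ (u₀ : EReal) + ((lam * L y : ℝ) : EReal) := by
      intro y
      rw [← EReal.coe_add]
      by_cases hbot : u y = ⊥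
      · rw [hbot]; exact bot_le
      obtain ⟨v, hv⟩ : ∃ v : ℝ, u y = (v : EReal) :=
        ⟨(u y).toReal, (EReal.coe_toReal (hntop y) hbot).symm⟩
      rw [hv, EReal.coe_le_coe_iff]
      rcases lt_trichotomy (L y) 0 with hneg | hzero | hpos
      · -- negative side: lam is at most the slope to y
        have hub : ∀ r ∈ S, r ≤ (u₀ - v) / (-L y) := by
          rintro r ⟨w, vw, hvw, hLw, rfl⟩
          have := hpair w y vw v hvw hv hLw hneg
          rw [div_le_div_iff₀ hLw (by linarith)]
          nlinarith [this]
        have : lam ≤ (u₀ - v) / (-L y) := csSup_le hSne hub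
        rw [le_div_iff₀ (by linarith)] at this
        nlinarith [this]
      · have := hH y (by rw [hzero])
        rw [hv, EReal.coe_le_coe_iff] at this
        rw [hzero]; linarith
      · have hmem : (v - u₀) / L y ∈ S := ⟨y, v, hv, hpos, rfl⟩
        have h1 : (v - u₀) / L y ≤ lam :=
          le_csSup ⟨_, fun r hr => hSbdd r hr⟩ hmem
        rw [div_le_iff₀ hpos] at h1
        linarith
    refine ⟨(lam • p₀, lam), ?_, hlampos, rfl⟩
    intro y
    have heq : (lam • p₀) ⬝ᵥ (y.1 - q₀) + lam * (y.2 - x₀) = lam * L y := by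
      rw [smul_dotProduct]
      simp only [hL, smul_eq_mul]
      rw [dotProduct_comm]
      ring
    rw [heq, hu₀]
    exact hkey y
  · -- backward direction
    rintro ⟨z, hsup, hz2, hzp⟩ q
    have := hsup (q₀ + q, x₀ - q ⬝ᵥ p₀)
    have heq : z.1 ⬝ᵥ ((q₀ + q) - q₀) + z.2 * ((x₀ - q ⬝ᵥ p₀) - x₀) = 0 := by
      have h1 : (q₀ + q) - q₀ = q := by abel
      rw [h1, ← hzp, smul_dotProduct]
      rw [dotProduct_comm]
      simp only [smul_eq_mul]
      ring
    rw [heq] at this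
    simpa using this
end

section
/- Let u : (ℝ × ℝ) × ℝ → ℝ ∪ {−∞} be concave, real-valued on an open neighborhood of the point y₀ = ((1,0), 0), and satisfy u((1,0), x) > u((1,0), 0) for every x > 0. Define Z := { (p_B, p) ∈ ℝ × ℝ : u((1,0) + q, −(q₁·p_B + q₂·p)) ≤ u((1,0), 0) for all q = (q₁,q₂) ∈ ℝ² } and P := { p ∈ ℝ : u((1, ε), −ε·p) ≤ u((1,0), 0) for all ε ∈ ℝ }. Then P equals the projection of Z onto its second coordinate: P = { p ∈ ℝ : ∃ p_B ∈ ℝ, (p_B, p) ∈ Z }. -/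
private lemma ereal_real_lt {x : EReal} (htop : x ≠ ⊤) {r : ℝ} (h : (r : EReal) < x) :
    ∃ s : ℝ, x = (s : EReal) ∧ r < s := by
  have hbot : x ≠ ⊥ := by
    intro hx
    rw [hx] at h
    exact not_lt_bot h
  refine ⟨x.toReal, (EReal.coe_toReal htop hbot).symm, ?_⟩
  rw [← EReal.coe_toReal htop hbot] at h
  exact_mod_cast h

private lemma ereal_real_le {x : EReal} (htop : x ≠ ⊤) {r : ℝ} (h : (r : EReal) ≤ x) :
    ∃ s : ℝ, x = (s : EReal) ∧ r ≤ s := by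
  have hbot : x ≠ ⊥ := by
    intro hx
    rw [hx] at h
    exact EReal.coe_ne_bot r (le_bot_iff.mp h)
  refine ⟨x.toReal, (EReal.coe_toReal htop hbot).symm, ?_⟩
  rw [← EReal.coe_toReal htop hbot] at h
  exact_mod_cast h

private lemma comb (t a1 a2 a3 b1 b2 b3 : ℝ) :
    t • (((a1, a2), a3) : (ℝ × ℝ) × ℝ) + (1 - t) • (((b1, b2), b3) : (ℝ × ℝ) × ℝ) =
      ((t * a1 + (1 - t) * b1, t * a2 + (1 - t) * b2), t * a3 + (1 - t) * b3) := by
  simp [Prod.smul_mk, Prod.mk_add_mk, smul_eq_mul]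

private lemma conc_real {u : (ℝ × ℝ) × ℝ → EReal} (hconc : ConcaveE u)
    (a b : (ℝ × ℝ) × ℝ) {t : ℝ} (h0 : 0 ≤ t) (h1 : t ≤ 1) {ra rb : ℝ}
    (ha : u a = (ra : EReal)) (hb : u b = (rb : EReal)) :
    ((t * ra + (1 - t) * rb : ℝ) : EReal) ≤ u (t • a + (1 - t) • b) := by
  have h := hconc a b t h0 h1
  rw [ha, hb, ← EReal.coe_mul, ← EReal.coe_mul, ← EReal.coe_add] at h
  exact h

set_option maxHeartbeats 1000000 in
/-- One-sided quantitative bound: if `u` exceeds the base value `r0` at a point with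
first coordinate `1 + c`, `c > 0`, then the "financing gap" `-(x + e p)` is at most a
multiple of `c` (the multiple depending only on fixed data). -/
private lemma bound_pos {u : (ℝ × ℝ) × ℝ → EReal} (hconc : ConcaveE u)
    (hntop : ∀ y, u y ≠ ⊤) {p r0 rδ rm δ h : ℝ}
    (hδ : 0 < δ) (hh : 0 < h)
    (hrδ : u ((1, 0), δ) = (rδ : EReal)) (hrm : u ((1 - h, 0), 0) = (rm : EReal))
    (hrδ0 : r0 < rδ)
    (hP' : ∀ e x : ℝ, x + e * p = 0 → u ((1, e), x) ≤ (r0 : EReal)) :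
    ∀ c e x : ℝ, 0 < c → (r0 : EReal) < u ((1 + c, e), x) →
      -(x + e * p) ≤ max 0 (2 * δ * (r0 - rm) / ((rδ - r0) * (2 * h))) * c := by
  intro c e x hc hu
  set K := max 0 (2 * δ * (r0 - rm) / ((rδ - r0) * (2 * h))) with hK
  obtain ⟨rz, hrz, hrz0⟩ := ereal_real_lt (hntop _) hu
  set l := x + e * p with hl
  set t := h / (c + h) with ht
  have hch : 0 < c + h := by linarith
  have ht0 : 0 < t := div_pos hh hch
  have ht1 : t < 1 := (div_lt_one hch).mpr (by linarith)
  have htc : t * (c + h) = h := by rw [ht]; exact div_mul_cancel₀ _ hch.ne'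
  have hcomb := conc_real hconc ((1 + c, e), x) ((1 - h, 0), 0) ht0.le ht1.le hrz hrm
  rw [comb] at hcomb
  have h1 : t * (1 + c) + (1 - t) * (1 - h) = 1 := by linear_combination htc
  have h2 : t * e + (1 - t) * 0 = t * e := by ring
  have h3 : t * x + (1 - t) * 0 = t * x := by ring
  rw [h1, h2, h3] at hcomb
  obtain ⟨rP, hrP, hrPge⟩ := ereal_real_le (hntop _) hcomb
  have hKc : 0 ≤ K * c := mul_nonneg (le_max_left _ _) hc.le
  rcases le_or_gt 0 l with hl0 | hl0
  · linarith
  · have hltl : t * l < 0 := mul_neg_of_pos_of_neg ht0 hl0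
    set s := δ / (δ - t * l) with hs
    have hden2 : 0 < δ - t * l := by linarith
    have hs0 : 0 < s := div_pos hδ hden2
    have hs1 : s < 1 := (div_lt_one hden2).mpr (by linarith)
    have hsc : s * (δ - t * l) = δ := by rw [hs]; exact div_mul_cancel₀ _ hden2.ne'
    have hcomb2 := conc_real hconc ((1, t * e), t * x) ((1, 0), δ) hs0.le hs1.le hrP hrδ
    rw [comb] at hcomb2
    have g1 : s * 1 + (1 - s) * 1 = 1 := by ring
    have g2 : s * (t * e) + (1 - s) * 0 = s * (t * e) := by ring
    rw [g1, g2] at hcomb2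
    have hQ := hP' (s * (t * e)) (s * (t * x) + (1 - s) * δ)
      (by linear_combination (-(s * t)) * hl - hsc)
    have hfin2 : s * rP + (1 - s) * rδ ≤ r0 := by
      have := le_trans hcomb2 hQ
      exact_mod_cast this
    have h4 : rδ - r0 ≤ s * rδ - s * rP := by nlinarith [hfin2]
    have h5a : s * (δ - t * l) * (rδ - rP) = δ * (rδ - rP) := by rw [hsc]
    have h5 : (rδ - r0) * (δ - t * l) ≤ δ * (rδ - rP) := by
      nlinarith [mul_le_mul_of_nonneg_right h4 hden2.le, h5a]
    have hA : (rδ - r0) * (t * (-l)) ≤ δ * ((1 - t) * (r0 - rm)) := by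
      nlinarith [h5, mul_le_mul_of_nonneg_left hrPge hδ.le,
        mul_pos (mul_pos hδ ht0) (sub_pos.mpr hrz0)]
    have hB : (1 - t) * (2 * h) = 2 * (t * c) := by linear_combination (-2) * htc
    have hvh : 0 < (rδ - r0) * (2 * h) := mul_pos (sub_pos.mpr hrδ0) (by linarith)
    rcases le_or_gt (r0 - rm) 0 with hrm0 | hrm0
    · have h1t : (0:ℝ) ≤ 1 - t := by linarith
      have hRHS : δ * ((1 - t) * (r0 - rm)) ≤ 0 :=
        mul_nonpos_of_nonneg_of_nonpos hδ.le
          (mul_nonpos_of_nonneg_of_nonpos h1t hrm0)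
      have hlneg : -l ≤ 0 := by
        by_contra hpos
        push_neg at hpos
        have h2 : 0 < (rδ - r0) * (t * -l) :=
          mul_pos (sub_pos.mpr hrδ0) (mul_pos ht0 (by linarith))
        linarith [hA, hRHS]
      linarith
    · have hκK : 2 * δ * (r0 - rm) / ((rδ - r0) * (2 * h)) ≤ K := le_max_right _ _
      have hmain : (-l) * ((rδ - r0) * (2 * h)) ≤ 2 * δ * (r0 - rm) * c := by
        have hAh : (rδ - r0) * (t * (-l)) * (2 * h) ≤ δ * ((1 - t) * (r0 - rm)) * (2 * h) :=
          mul_le_mul_of_nonneg_right hA (by linarith)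
        have hEq : δ * (r0 - rm) * ((1 - t) * (2 * h)) = δ * (r0 - rm) * (2 * (t * c)) := by
          rw [hB]
        nlinarith [hAh, hEq, ht0]
      have hdivK : -l ≤ 2 * δ * (r0 - rm) / ((rδ - r0) * (2 * h)) * c := by
        rw [div_mul_eq_mul_div, le_div_iff₀ hvh]
        linarith [hmain]
      calc -l ≤ 2 * δ * (r0 - rm) / ((rδ - r0) * (2 * h)) * c := hdivK
        _ ≤ K * c := mul_le_mul_of_nonneg_right hκK hc.le

set_option maxHeartbeats 1000000 in
private lemma key (u : (ℝ × ℝ) × ℝ → EReal)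
    (hconc : ConcaveE u)
    (hntop : ∀ y, u y ≠ ⊤)
    (ε : ℝ) (hε : 0 < ε)
    (hfin : ∀ y ∈ Metric.ball ((((1 : ℝ), (0 : ℝ)), (0 : ℝ)) : (ℝ × ℝ) × ℝ) ε,
      ∃ r : ℝ, u y = (r : EReal))
    (hincr : ∀ x : ℝ, 0 < x → u ((1, 0), 0) < u ((1, 0), x))
    (p : ℝ) (hP : ∀ e : ℝ, u ((1, e), -(e * p)) ≤ u ((1, 0), 0)) :
    ∃ pB : ℝ, ∀ q : ℝ × ℝ, u ((1 + q.1, q.2), -(q.1 * pB + q.2 * p)) ≤ u ((1, 0), 0) := by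
  have hball : ∀ a b c : ℝ, |a - 1| < ε → |b| < ε → |c| < ε →
      (((a, b), c) : (ℝ × ℝ) × ℝ) ∈ Metric.ball ((((1 : ℝ), (0 : ℝ)), (0 : ℝ)) : (ℝ × ℝ) × ℝ) ε := by
    intro a b c h1 h2 h3
    rw [Metric.mem_ball, Prod.dist_eq]
    refine max_lt ?_ ?_
    · rw [Prod.dist_eq]
      refine max_lt ?_ ?_
      · rw [Real.dist_eq]; exact h1
      · rw [Real.dist_eq, sub_zero]; exact h2
    · rw [Real.dist_eq, sub_zero]; exact h3
  obtain ⟨r0, hr0⟩ := hfin _ (Metric.mem_ball_self hε)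
  set δ := ε / 2 with hδdef
  have hδ : 0 < δ := by rw [hδdef]; linarith
  have hδε : δ < ε := by rw [hδdef]; linarith
  obtain ⟨rδ, hrδ⟩ := hfin ((1, 0), δ) (hball 1 0 δ
    (by rw [abs_lt]; constructor <;> linarith)
    (by rw [abs_lt]; constructor <;> linarith)
    (by rw [abs_lt]; constructor <;> linarith))
  have hrδ0 : r0 < rδ := by
    have h := hincr δ hδ
    rw [hr0, hrδ] at h
    exact_mod_cast h
  obtain ⟨rm, hrm⟩ := hfin ((1 - ε / 2, 0), 0) (hball (1 - ε / 2) 0 0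
    (by rw [abs_lt]; constructor <;> linarith)
    (by rw [abs_lt]; constructor <;> linarith)
    (by rw [abs_lt]; constructor <;> linarith))
  obtain ⟨rp, hrp⟩ := hfin ((1 + ε / 2, 0), 0) (hball (1 + ε / 2) 0 0
    (by rw [abs_lt]; constructor <;> linarith)
    (by rw [abs_lt]; constructor <;> linarith)
    (by rw [abs_lt]; constructor <;> linarith))
  obtain ⟨rw0, hrw0⟩ := hfin ((1, 0), -δ) (hball 1 0 (-δ)
    (by rw [abs_lt]; constructor <;> linarith)
    (by rw [abs_lt]; constructor <;> linarith)
    (by rw [abs_lt]; constructor <;> linarith))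
  have hP'' : ∀ e x : ℝ, x + e * p = 0 → u ((1, e), x) ≤ (r0 : EReal) := by
    intro e x hx
    have hxe : x = -(e * p) := by linarith
    rw [hxe, ← hr0]
    exact hP e
  -- step 2 : on the slice q₁ = 0 the superlevel set lies strictly above the Davis line
  have step2 : ∀ e x : ℝ, (r0 : EReal) < u ((1, e), x) → 0 < x + e * p := by
    intro e x hu
    by_contra hle
    push_neg at hle
    obtain ⟨rz, hrz, hrz0⟩ := ereal_real_lt (hntop _) hu
    rcases eq_or_lt_of_le hle with heq | hlt
    · have h0 := hP'' e x heq
      rw [hrz] at h0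
      have : rz ≤ r0 := by exact_mod_cast h0
      linarith
    · set t := δ / (δ - (x + e * p)) with htdef
      have hden : 0 < δ - (x + e * p) := by linarith
      have ht0 : 0 < t := div_pos hδ hden
      have ht1 : t < 1 := (div_lt_one hden).mpr (by linarith)
      have htc : t * (δ - (x + e * p)) = δ := by rw [htdef]; exact div_mul_cancel₀ _ hden.ne'
      have hcomb := conc_real hconc ((1, e), x) ((1, 0), δ) ht0.le ht1.le hrz hrδ
      rw [comb] at hcomb
      have h1 : t * 1 + (1 - t) * 1 = 1 := by ring
      have h2 : t * e + (1 - t) * 0 = t * e := by ring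
      rw [h1, h2] at hcomb
      have hQ := hP'' (t * e) (t * x + (1 - t) * δ) (by linear_combination -htc)
      have hle2 : t * rz + (1 - t) * rδ ≤ r0 := by
        have := le_trans hcomb hQ
        exact_mod_cast this
      nlinarith [mul_pos ht0 (sub_pos.mpr hrz0),
        mul_pos (show (0:ℝ) < 1 - t by linarith) (sub_pos.mpr hrδ0)]
  -- step 3 : quantitative bound for q₁ > 0
  set K1 := max 0 (2 * δ * (r0 - rm) / ((rδ - r0) * (2 * (ε / 2)))) with hK1
  have step3 : ∀ c e x : ℝ, 0 < c → (r0 : EReal) < u ((1 + c, e), x) →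
      -(x + e * p) ≤ K1 * c :=
    bound_pos hconc hntop hδ (by linarith : (0:ℝ) < ε / 2) hrδ hrm hrδ0 hP''
  -- step 3' : quantitative bound for q₁ < 0, via the reflected function
  have hconc' : ConcaveE (fun z : (ℝ × ℝ) × ℝ => u ((2 - z.1.1, z.1.2), z.2)) := by
    rintro ⟨⟨a1, a2⟩, a3⟩ ⟨⟨b1, b2⟩, b3⟩ t ht0 ht1
    have h := hconc ((2 - a1, a2), a3) ((2 - b1, b2), b3) t ht0 ht1
    rw [comb] at h
    rw [comb]
    show (t : EReal) * u ((2 - a1, a2), a3) + ((1 - t : ℝ) : EReal) * u ((2 - b1, b2), b3) ≤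
      u ((2 - (t * a1 + (1 - t) * b1), t * a2 + (1 - t) * b2), t * a3 + (1 - t) * b3)
    rw [show (2 - (t * a1 + (1 - t) * b1) : ℝ) = t * (2 - a1) + (1 - t) * (2 - b1) from by ring]
    exact h
  have hrδ' : (fun z : (ℝ × ℝ) × ℝ => u ((2 - z.1.1, z.1.2), z.2)) ((1, 0), δ) = (rδ : EReal) := by
    show u ((2 - 1, 0), δ) = (rδ : EReal)
    rw [show (2 - 1 : ℝ) = 1 from by norm_num]
    exact hrδ
  have hrp' : (fun z : (ℝ × ℝ) × ℝ => u ((2 - z.1.1, z.1.2), z.2)) ((1 - ε / 2, 0), 0)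
      = (rp : EReal) := by
    show u ((2 - (1 - ε / 2), 0), 0) = (rp : EReal)
    rw [show (2 - (1 - ε / 2) : ℝ) = 1 + ε / 2 from by ring]
    exact hrp
  have hP''' : ∀ e x : ℝ, x + e * p = 0 →
      (fun z : (ℝ × ℝ) × ℝ => u ((2 - z.1.1, z.1.2), z.2)) ((1, e), x) ≤ (r0 : EReal) := by
    intro e x hx
    show u ((2 - 1, e), x) ≤ (r0 : EReal)
    rw [show (2 - 1 : ℝ) = 1 from by norm_num]
    exact hP'' e x hx
  have step3aux := bound_pos hconc' (fun y => hntop _) hδ (by linarith : (0:ℝ) < ε / 2)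
    hrδ' hrp' hrδ0 hP'''
  set K2 := max 0 (2 * δ * (r0 - rp) / ((rδ - r0) * (2 * (ε / 2)))) with hK2
  have step3' : ∀ c e x : ℝ, c < 0 → (r0 : EReal) < u ((1 + c, e), x) →
      -(x + e * p) ≤ K2 * (-c) := by
    intro c e x hc hu
    have h := step3aux (-c) e x (by linarith) (by
      show (r0 : EReal) < u ((2 - (1 + -c), e), x)
      rw [show (2 - (1 + -c) : ℝ) = 1 + c from by ring]
      exact hu)
    exact h
  -- step 4 : pairwise compatibility between positive and negative sides
  have step4 : ∀ c1 e1 x1 c2 e2 x2 : ℝ, 0 < c1 → c2 < 0 →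
      (r0 : EReal) < u ((1 + c1, e1), x1) → (r0 : EReal) < u ((1 + c2, e2), x2) →
      c2 * (x1 + e1 * p) ≤ c1 * (x2 + e2 * p) := by
    intro c1 e1 x1 c2 e2 x2 hc1 hc2 hu1 hu2
    obtain ⟨r1, hr1, hr10⟩ := ereal_real_lt (hntop _) hu1
    obtain ⟨r2, hr2, hr20⟩ := ereal_real_lt (hntop _) hu2
    set t := -c2 / (c1 - c2) with htdef
    have hden : 0 < c1 - c2 := by linarith
    have ht0 : 0 < t := div_pos (by linarith) hden
    have ht1 : t < 1 := (div_lt_one hden).mpr (by linarith)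
    have htc : t * (c1 - c2) = -c2 := by rw [htdef]; exact div_mul_cancel₀ _ hden.ne'
    have hcomb := conc_real hconc ((1 + c1, e1), x1) ((1 + c2, e2), x2) ht0.le ht1.le hr1 hr2
    rw [comb] at hcomb
    have h1 : t * (1 + c1) + (1 - t) * (1 + c2) = 1 := by linear_combination htc
    rw [h1] at hcomb
    have hval : r0 < t * r1 + (1 - t) * r2 := by
      nlinarith [mul_pos ht0 (sub_pos.mpr hr10),
        mul_pos (show (0:ℝ) < 1 - t by linarith) (sub_pos.mpr hr20)]
    have huP : (r0 : EReal) < u ((1, t * e1 + (1 - t) * e2), t * x1 + (1 - t) * x2) :=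
      lt_of_lt_of_le (by exact_mod_cast hval) hcomb
    have hpos := step2 (t * e1 + (1 - t) * e2) (t * x1 + (1 - t) * x2) huP
    have hEq1 : t * (c1 - c2) * (x1 + e1 * p) = -c2 * (x1 + e1 * p) := by rw [htc]
    have hEq2 : t * (c1 - c2) * (x2 + e2 * p) = -c2 * (x2 + e2 * p) := by rw [htc]
    nlinarith [mul_pos hpos hden, hEq1, hEq2]
  -- the candidate price pB
  set T := insert (-K2) {r : ℝ | ∃ c e x : ℝ, 0 < c ∧ (r0 : EReal) < u ((1 + c, e), x) ∧
    r = -(x + e * p) / c} with hT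
  have hTne : T.Nonempty := ⟨-K2, Set.mem_insert _ _⟩
  have hTbdd : BddAbove T := by
    refine ⟨max K1 (-K2), ?_⟩
    rintro r hr
    rcases Set.mem_insert_iff.mp hr with rfl | hmem
    · exact le_max_right _ _
    · obtain ⟨c, e, x, hc, hu, rfl⟩ := hmem
      refine le_trans ?_ (le_max_left _ _)
      rw [div_le_iff₀ hc]
      exact step3 c e x hc hu
  set pB := sSup T with hpB
  -- weak separation
  have main : ∀ e x c : ℝ, (r0 : EReal) < u ((1 + c, e), x) → 0 ≤ (x + e * p) + c * pB := by
    intro e x c hu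
    rcases lt_trichotomy c 0 with hc | hc | hc
    · have hub : ∀ r ∈ T, r ≤ -(x + e * p) / c := by
        intro r hr
        rcases Set.mem_insert_iff.mp hr with rfl | hmem
        · rw [le_div_iff_of_neg hc]
          have := step3' c e x hc hu
          linarith
        · obtain ⟨c1, e1, x1, hc1, hu1, rfl⟩ := hmem
          have h4 := step4 c1 e1 x1 c e x hc1 hc hu1 hu
          have hneg : (0:ℝ) < -c := by linarith
          rw [show -(x1 + e1 * p) / c1 = -(x1 + e1 * p) / c1 from rfl,
            show -(x + e * p) / c = (x + e * p) / (-c) from by ring,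
            div_le_div_iff₀ hc1 hneg]
          nlinarith [h4]
      have hle : pB ≤ -(x + e * p) / c := csSup_le hTne hub
      rw [le_div_iff_of_neg hc] at hle
      linarith
    · have hu' : (r0 : EReal) < u ((1, e), x) := by
        rw [hc] at hu
        norm_num at hu
        exact hu
      have := step2 e x hu'
      rw [hc]
      linarith
    · have hmem : -(x + e * p) / c ∈ T :=
        Set.mem_insert_of_mem _ ⟨c, e, x, hc, hu, rfl⟩
      have hle : -(x + e * p) / c ≤ pB := le_csSup hTbdd hmem
      rw [div_le_iff₀ hc] at hle
      linarith
  -- conclude : strict separation fails on the plane, so u ≤ u₀ there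
  refine ⟨pB, fun q => ?_⟩
  rw [hr0]
  by_contra hcon
  push_neg at hcon
  obtain ⟨ry, hry, hry0⟩ := ereal_real_lt (hntop _) hcon
  set b := max 0 (r0 - rw0) with hbdef
  have hb0 : 0 ≤ b := le_max_left _ _
  have hbr : r0 - rw0 ≤ b := le_max_right _ _
  have ha : 0 < ry - r0 := by linarith
  set t := (b + (ry - r0) / 2) / (b + (ry - r0)) with htdef
  have hden : 0 < b + (ry - r0) := by linarith
  have ht0 : 0 < t := div_pos (by linarith) hden
  have ht1 : t < 1 := (div_lt_one hden).mpr (by linarith)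
  have htEq : t * (b + (ry - r0)) = b + (ry - r0) / 2 := by rw [htdef]; exact div_mul_cancel₀ _ hden.ne'
  have hcomb := conc_real hconc ((1 + q.1, q.2), -(q.1 * pB + q.2 * p)) ((1, 0), -δ)
    ht0.le ht1.le hry hrw0
  rw [comb] at hcomb
  have h1 : t * (1 + q.1) + (1 - t) * 1 = 1 + t * q.1 := by ring
  have h2 : t * q.2 + (1 - t) * 0 = t * q.2 := by ring
  rw [h1, h2] at hcomb
  have hval : r0 < t * ry + (1 - t) * rw0 := by
    nlinarith [htEq, mul_le_mul_of_nonneg_left hbr (show (0:ℝ) ≤ 1 - t by linarith), ha]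
  have huz : (r0 : EReal) < u ((1 + t * q.1, t * q.2),
      t * -(q.1 * pB + q.2 * p) + (1 - t) * -δ) :=
    lt_of_lt_of_le (by exact_mod_cast hval) hcomb
  have hmain := main (t * q.2) (t * -(q.1 * pB + q.2 * p) + (1 - t) * -δ) (t * q.1) huz
  nlinarith [hmain, mul_pos (show (0:ℝ) < 1 - t by linarith) hδ]

theorem davis_prices_equal_projection_of_marginal_prices
    (u : (ℝ × ℝ) × ℝ → EReal)
    (hconc : ConcaveE u)
    (hntop : ∀ y, u y ≠ ⊤)
    (ε : ℝ) (hε : 0 < ε)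
    (hfin : ∀ y ∈ Metric.ball ((((1 : ℝ), (0 : ℝ)), (0 : ℝ)) : (ℝ × ℝ) × ℝ) ε,
      ∃ r : ℝ, u y = (r : EReal))
    (hincr : ∀ x : ℝ, 0 < x → u ((1, 0), 0) < u ((1, 0), x)) :
    {p : ℝ | ∀ e : ℝ, u ((1, e), -(e * p)) ≤ u ((1, 0), 0)} =
      {p : ℝ | ∃ pB : ℝ, ∀ q : ℝ × ℝ,
        u ((1 + q.1, q.2), -(q.1 * pB + q.2 * p)) ≤ u ((1, 0), 0)} := by
  ext p
  simp only [Set.mem_setOf_eq]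
  constructor
  · intro hP
    exact key u hconc hntop ε hε hfin hincr p hP
  · rintro ⟨pB, h⟩ e
    have := h (0, e)
    norm_num at this
    exact this
end

section
/- Let u : ℝ × ℝ → ℝ ∪ {−∞} be concave and real-valued on an open neighborhood of (0,0), and define P := { p ∈ ℝ : u(ε, −ε·p) ≤ u(0,0) for all ε ∈ ℝ }. If (0,0) ∈ ∂u(0,0), then P = ℝ. Otherwise, P = { δ / y : (δ, y) ∈ ∂u(0,0), y ≠ 0 }. -/
lemma davis_ereal_cases (x : EReal) (hx : x ≠ ⊤) : x = ⊥ ∨ ∃ r : ℝ, x = (r : EReal) := by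
  induction x using EReal.rec with
  | bot => exact Or.inl rfl
  | coe r => exact Or.inr ⟨r, rfl⟩
  | top => exact absurd rfl hx

/-- Key lemma: if a concave `u` is dominated by `u 0 = r0` along the line `ℝ • d`, and is
finite at two points `±s₀ • e`, then there is a "one-dimensional supergradient" `α` in the
direction `e`, valid on the whole plane spanned by `d` and `e`. -/
lemma davis_key_lemma (u : ℝ × ℝ → EReal) (hconc : ConcaveE u) (hntop : ∀ y, u y ≠ ⊤)
    (d e : ℝ × ℝ) (r0 : ℝ)
    (hline : ∀ t : ℝ, u (t • d) ≤ (r0 : EReal))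
    (s₀ : ℝ) (hs₀ : 0 < s₀)
    (rp rm : ℝ) (hrp : u (s₀ • e) = (rp : EReal)) (hrm : u ((-s₀) • e) = (rm : EReal)) :
    ∃ α : ℝ, ∀ t s : ℝ, u (t • d + s • e) ≤ ((r0 + α * s : ℝ) : EReal) := by
  set A : Set ℝ := {x | ∃ t s r : ℝ, 0 < s ∧ u (t • d + s • e) = (r : EReal) ∧ x = (r - r0) / s}
    with hA
  have hAne : A.Nonempty :=
    ⟨(rp - r0) / s₀, 0, s₀, rp, hs₀, by rw [zero_smul, zero_add]; exact hrp, rfl⟩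
  have cross : ∀ t₁ s₁ r₁ : ℝ, s₁ < 0 → u (t₁ • d + s₁ • e) = (r₁ : EReal) →
      ∀ x ∈ A, x ≤ (r₁ - r0) / s₁ := by
    rintro t₁ s₁ r₁ hs₁ hq₁ x ⟨t₂, s₂, r₂, hs₂, hq₂, rfl⟩
    have hdd : (0:ℝ) < s₂ - s₁ := by linarith
    set l : ℝ := s₂ / (s₂ - s₁) with hl
    have hl0 : 0 ≤ l := by positivity
    have hl1 : l ≤ 1 := by rw [hl, div_le_one hdd]; linarith
    have hcomb := hconc (t₁ • d + s₁ • e) (t₂ • d + s₂ • e) l hl0 hl1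
    have hszero : l * s₁ + (1 - l) * s₂ = 0 := by
      rw [hl]; field_simp; ring
    have hlin : l • (t₁ • d + s₁ • e) + (1 - l) • (t₂ • d + s₂ • e)
        = (l * t₁ + (1 - l) * t₂) • d + (l * s₁ + (1 - l) * s₂) • e := by
      module
    rw [hlin, hszero, zero_smul, add_zero] at hcomb
    rw [hq₁, hq₂] at hcomb
    have h2 := le_trans hcomb (hline _)
    rw [← EReal.coe_mul, ← EReal.coe_mul, ← EReal.coe_add, EReal.coe_le_coe_iff] at h2
    -- h2 : l * r₁ + (1 - l) * r₂ ≤ r0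
    have h1 : (l * r₁ + (1 - l) * r₂) * (s₂ - s₁) ≤ r0 * (s₂ - s₁) :=
      mul_le_mul_of_nonneg_right h2 hdd.le
    have h2' : (l * r₁ + (1 - l) * r₂) * (s₂ - s₁) = s₂ * r₁ - s₁ * r₂ := by
      rw [hl]; field_simp; ring
    rw [div_le_iff₀ hs₂, div_mul_eq_mul_div, le_div_iff_of_neg hs₁]
    nlinarith [h1, h2']
  have hbdd : BddAbove A := by
    refine ⟨(rm - r0) / (-s₀), ?_⟩
    intro x hx
    exact cross 0 (-s₀) rm (by linarith) (by rw [zero_smul, zero_add]; exact hrm) x hx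
  refine ⟨sSup A, fun t s => ?_⟩
  rcases davis_ereal_cases (u (t • d + s • e)) (hntop _) with hbot | ⟨r, hr⟩
  · rw [hbot]; exact bot_le
  rcases lt_trichotomy s 0 with hs | hs | hs
  · have hα := csSup_le hAne (cross t s r hs hr)
    rw [le_div_iff_of_neg hs] at hα
    rw [hr, EReal.coe_le_coe_iff]
    linarith
  · subst hs
    rw [zero_smul, add_zero]
    refine (hline t).trans ?_
    rw [EReal.coe_le_coe_iff]
    linarith
  · have hmem : (r - r0) / s ∈ A := ⟨t, s, r, hs, hr, rfl⟩
    have hα := le_csSup hbdd hmem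
    rw [div_le_iff₀ hs] at hα
    rw [hr, EReal.coe_le_coe_iff]
    linarith

theorem davis_prices_via_supergradient
    (u : ℝ × ℝ → EReal)
    (hconc : ConcaveE u)
    (hntop : ∀ y, u y ≠ ⊤)
    (ε : ℝ) (hε : 0 < ε)
    (hfin : ∀ y ∈ Metric.ball (((0 : ℝ), (0 : ℝ)) : ℝ × ℝ) ε, ∃ r : ℝ, u y = (r : EReal)) :
    let S : Set (ℝ × ℝ) :=
      {z | ∀ y : ℝ × ℝ, u y ≤ u (0, 0) + ((z.1 * y.1 + z.2 * y.2 : ℝ) : EReal)}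
    let P : Set ℝ := {p | ∀ e : ℝ, u (e, -(e * p)) ≤ u (0, 0)}
    (((0 : ℝ), (0 : ℝ)) ∈ S → P = Set.univ) ∧
      (((0 : ℝ), (0 : ℝ)) ∉ S → P = {p : ℝ | ∃ z ∈ S, z.2 ≠ 0 ∧ p = z.1 / z.2}) := by
  intro S P
  obtain ⟨r0, hr0⟩ := hfin (0, 0) (Metric.mem_ball_self hε)
  constructor
  · intro h0
    ext p
    simp only [Set.mem_univ, iff_true]
    intro e'
    have := h0 (e', -(e' * p))
    simpa using this
  · intro h0
    ext p
    simp only [Set.mem_setOf_eq]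
    constructor
    · intro hp
      set s₀ : ℝ := ε / (2 * (1 + |p|)) with hs₀def
      have habs : 0 ≤ |p| := abs_nonneg p
      have hs₀ : 0 < s₀ := by positivity
      have hs₀small : s₀ * (1 + |p|) = ε / 2 := by
        rw [hs₀def]; field_simp
      have hmem : ∀ c : ℝ, |c| = s₀ →
          (c • ((p, 1) : ℝ × ℝ)) ∈ Metric.ball (((0:ℝ), (0:ℝ)) : ℝ × ℝ) ε := by
        intro c hc
        have h1 : |c * p| < ε := by
          rw [abs_mul, hc]
          calc s₀ * |p| ≤ s₀ * (1 + |p|) := by nlinarith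
          _ = ε / 2 := hs₀small
          _ < ε := by linarith
        have h2 : |c * 1| < ε := by
          rw [abs_mul, hc]; simp only [abs_one, mul_one]
          nlinarith
        rw [Metric.mem_ball, Prod.dist_eq]
        simp only [Prod.smul_mk, smul_eq_mul, Real.dist_eq]
        rw [max_lt_iff]
        constructor
        · simpa using h1
        · simpa using h2
      obtain ⟨rp, hrp⟩ := hfin _ (hmem s₀ (abs_of_pos hs₀))
      obtain ⟨rm, hrm⟩ := hfin _ (hmem (-s₀) (by rw [abs_neg]; exact abs_of_pos hs₀))
      have hline : ∀ t : ℝ, u (t • ((1, -p) : ℝ × ℝ)) ≤ (r0 : EReal) := by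
        intro t
        have := hp t
        rw [hr0] at this
        convert this using 3
        · simp
        · simp [mul_comm]
      obtain ⟨α, hα⟩ := davis_key_lemma u hconc hntop (1, -p) (p, 1) r0 hline s₀ hs₀ rp rm hrp hrm
      have hp2 : (0:ℝ) < 1 + p ^ 2 := by positivity
      have hdecomp : ∀ y : ℝ × ℝ, y = ((y.1 - p * y.2) / (1 + p ^ 2)) • ((1, -p) : ℝ × ℝ)
          + ((p * y.1 + y.2) / (1 + p ^ 2)) • ((p, 1) : ℝ × ℝ) := by
        intro y
        ext
        · simp only [Prod.fst_add, Prod.smul_mk, smul_eq_mul, Prod.snd_add]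
          field_simp
          ring
        · simp only [Prod.fst_add, Prod.smul_mk, smul_eq_mul, Prod.snd_add]
          field_simp
          ring
      have hsuper : ∀ y : ℝ × ℝ,
          u y ≤ ((r0 + α * ((p * y.1 + y.2) / (1 + p ^ 2)) : ℝ) : EReal) := by
        intro y
        have := hα ((y.1 - p * y.2) / (1 + p ^ 2)) ((p * y.1 + y.2) / (1 + p ^ 2))
        rw [← hdecomp y] at this
        exact this
      have hα0 : α ≠ 0 := by
        intro hz
        apply h0
        intro y
        have := hsuper y
        rw [hz] at this
        simp only [zero_mul, add_zero] at this
        refine this.trans ?_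
        rw [hr0]
        norm_num
      set c : ℝ := α / (1 + p ^ 2) with hc
      have hcne : c ≠ 0 := div_ne_zero hα0 (by positivity)
      refine ⟨(c * p, c), ?_, hcne, ?_⟩
      · intro y
        refine (hsuper y).trans (le_of_eq ?_)
        rw [hr0, ← EReal.coe_add, EReal.coe_eq_coe_iff]
        rw [hc]
        field_simp
      · rw [mul_comm, mul_div_assoc, div_self hcne, mul_one]
    · rintro ⟨z, hzS, hz2, rfl⟩ e'
      have h := hzS (e', -(e' * (z.1 / z.2)))
      have heq : z.1 * e' + z.2 * -(e' * (z.1 / z.2)) = 0 := by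
        field_simp
        ring
      rw [heq] at h
      simpa using h
end

section
/- Let u : ℝ × ℝ → ℝ ∪ {−∞} be concave and real-valued on an open neighborhood of (0,0), and suppose that the function x ↦ u(0, x) is differentiable at 0 with derivative y_B > 0. Then the one-sided limits D⁺ := lim_{ε↓0} (u(ε,0) − u(0,0))/ε and D⁻ := lim_{ε↑0} (u(ε,0) − u(0,0))/ε exist in ℝ with D⁺ ≤ D⁻, and the set P := { p ∈ ℝ : u(ε, −ε·p) ≤ u(0,0) for all ε ∈ ℝ } is exactly the closed interval [D⁺ / y_B, D⁻ / y_B]. -/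
/-! Inside the ball `u` is a real concave function `f`, so in every direction `w` it has a one-sided
derivative `d w = lim_{t ↓ 0} (f (t • w) - f 0) / t`, and `d` is superadditive. Vertically `f` is
differentiable with derivative `y_B`, which forces `d (a, b) = d (a, 0) + b * y_B`. A concave
function that has dropped below its value at `0` along a ray stays below it, so `p` is a price iff
`d (1, -p) ≤ 0` and `d (-1, p) ≤ 0`, i.e. iff `d (1, 0) ≤ p * y_B ≤ -d (-1, 0)`; these are the
one-sided limits `D⁺` and `D⁻`. -/

open Filter

open Set Topology

lemma HasDerivWithinAt.tendsto_sub_div {g : ℝ → ℝ} {a x : ℝ} {s : Set ℝ}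
    (h : HasDerivWithinAt g a s x) (hx : x ∉ s) :
    Tendsto (fun t => (g t - g x) / (t - x)) (𝓝[s] x) (𝓝 a) :=
  ((hasDerivWithinAt_iff_tendsto_slope' hx).1 h).congr fun t => slope_def_field g x t

section LineDeriv

variable {E : Type*} [AddCommGroup E] [Module ℝ E]

noncomputable def rightLineDeriv (f : E → ℝ) (x v : E) : ℝ :=
  derivWithin (fun t : ℝ => f (x + t • v)) (Ioi 0) 0

lemma rightLineDeriv_zero (f : E → ℝ) (x : E) : rightLineDeriv f x 0 = 0 := by
  simp [rightLineDeriv]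

lemma rightLineDeriv_eq_of_hasDerivAt {f : E → ℝ} {x v : E} {a : ℝ}
    (h : HasDerivAt (fun t : ℝ => f (x + t • v)) a 0) : rightLineDeriv f x v = a :=
  h.hasDerivWithinAt.derivWithin (uniqueDiffWithinAt_Ioi 0)

lemma ConcaveOn.comp_add_smul {s : Set E} {f : E → ℝ} (hf : ConcaveOn ℝ s f) (x v : E) :
    ConcaveOn ℝ {t : ℝ | x + t • v ∈ s} (fun t => f (x + t • v)) := by
  convert hf.comp_affineMap (AffineMap.lineMap x (x + v)) using 1 <;>
    ext <;> simp [AffineMap.lineMap_apply_module', add_comm]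

variable [TopologicalSpace E] [ContinuousAdd E] [ContinuousSMul ℝ E]
  {s : Set E} {f : E → ℝ} {x : E}

lemma ConcaveOn.hasDerivWithinAt_rightLineDeriv (hf : ConcaveOn ℝ s f) (hs : IsOpen s)
    (hx : x ∈ s) (v : E) :
    HasDerivWithinAt (fun t : ℝ => f (x + t • v)) (rightLineDeriv f x v) (Ioi 0) 0 := by
  have hopen : IsOpen {t : ℝ | x + t • v ∈ s} := hs.preimage (by fun_prop)
  have h0 : (0 : ℝ) ∈ interior {t : ℝ | x + t • v ∈ s} := by
    rw [hopen.interior_eq]; simpa using hx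
  have := (hf.comp_add_smul x v).neg.differentiableWithinAt_Ioi_of_mem_interior h0
  exact (by simpa using this.neg : DifferentiableWithinAt ℝ _ _ _).hasDerivWithinAt

lemma ConcaveOn.slope_le_rightLineDeriv (hf : ConcaveOn ℝ s f) (hs : IsOpen s) (hx : x ∈ s)
    {v : E} {t : ℝ} (ht : 0 < t) (hxt : x + t • v ∈ s) :
    (f (x + t • v) - f x) / t ≤ rightLineDeriv f x v := by
  simpa [slope_def_field, rightLineDeriv] using (hf.comp_add_smul x v).slope_le_rightDeriv
    (by simpa using hx) hxt ht (hf.hasDerivWithinAt_rightLineDeriv hs hx v).differentiableWithinAt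


lemma eventually_add_smul_mem (hs : IsOpen s) (hx : x ∈ s) (v : E) :
    ∀ᶠ t in 𝓝 (0 : ℝ), x + t • v ∈ s :=
  (hs.preimage (by fun_prop : Continuous fun t : ℝ => x + t • v)).mem_nhds (by simpa using hx)

lemma ConcaveOn.hasDerivWithinAt_neg_rightLineDeriv_neg (hf : ConcaveOn ℝ s f) (hs : IsOpen s)
    (hx : x ∈ s) (v : E) :
    HasDerivWithinAt (fun t : ℝ => f (x + t • v)) (-rightLineDeriv f x (-v)) (Iio 0) 0 := by
  have h := (hf.hasDerivWithinAt_rightLineDeriv hs hx (-v)).scomp_of_eq 0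
    ((hasDerivAt_neg (0 : ℝ)).hasDerivWithinAt (s := Iio 0)) (fun t ht => neg_pos.2 ht)
    neg_zero.symm
  simpa [Function.comp_def] using h

lemma ConcaveOn.tendsto_rightLineDeriv (hf : ConcaveOn ℝ s f) (hs : IsOpen s) (hx : x ∈ s)
    (v : E) :
    Tendsto (fun t : ℝ => (f (x + t • v) - f x) / t) (𝓝[>] 0) (𝓝 (rightLineDeriv f x v)) := by
  simpa using (hf.hasDerivWithinAt_rightLineDeriv hs hx v).tendsto_sub_div self_notMem_Ioi

lemma ConcaveOn.rightLineDeriv_nonpos_iff (hf : ConcaveOn ℝ s f) (hs : IsOpen s) (hx : x ∈ s)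
    (v : E) : rightLineDeriv f x v ≤ 0 ↔ ∀ t : ℝ, 0 < t → x + t • v ∈ s → f (x + t • v) ≤ f x := by
  refine ⟨fun hd t ht hxt => ?_, fun h => ?_⟩
  · have := (hf.slope_le_rightLineDeriv hs hx ht hxt).trans hd
    rwa [div_le_iff₀ ht, zero_mul, sub_nonpos] at this
  · refine le_of_tendsto (hf.tendsto_rightLineDeriv hs hx v) ?_
    filter_upwards [self_mem_nhdsWithin, nhdsWithin_le_nhds (eventually_add_smul_mem hs hx v)]
      with t ht hxt
    exact div_nonpos_of_nonpos_of_nonneg (sub_nonpos.2 (h t ht hxt)) (le_of_lt ht)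

lemma ConcaveOn.rightLineDeriv_add_rightLineDeriv_le (hf : ConcaveOn ℝ s f) (hs : IsOpen s)
    (hx : x ∈ s) (v w : E) :
    rightLineDeriv f x v + rightLineDeriv f x w ≤ rightLineDeriv f x (v + w) := by
  have hdouble : Tendsto (fun t : ℝ => 2 * t) (𝓝[>] 0) (𝓝[>] 0) := by
    have := (continuous_const_mul (2 : ℝ)).continuousWithinAt.tendsto_nhdsWithin
      (x := 0) (s := Ioi 0) (fun t ht => mul_pos two_pos ht)
    rwa [mul_zero] at this
  have hslope (v : E) := (hf.tendsto_rightLineDeriv hs hx v).comp hdouble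
  refine le_of_tendsto_of_tendsto ((hslope v).add (hslope w))
    (hf.tendsto_rightLineDeriv hs hx (v + w)) ?_
  filter_upwards [self_mem_nhdsWithin, hdouble.eventually (nhdsWithin_le_nhds
    ((eventually_add_smul_mem hs hx v).and (eventually_add_smul_mem hs hx w)))] with t ht hmem
  have hmid := hf.2 hmem.1 hmem.2 (by norm_num : (0 : ℝ) ≤ 1 / 2) (by norm_num : (0 : ℝ) ≤ 1 / 2)
    (by norm_num)
  have hpt : (1 / 2 : ℝ) • (x + (2 * t) • v) + (1 / 2 : ℝ) • (x + (2 * t) • w) =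
      x + t • (v + w) := by
    module
  rw [hpt, smul_eq_mul, smul_eq_mul] at hmid
  have ht : (0 : ℝ) < t := ht
  simp only [Function.comp_apply]
  rw [div_add_div _ _ (by positivity) (by positivity), div_le_div_iff₀ (by positivity) ht]
  nlinarith

lemma ConcaveOn.rightLineDeriv_add_smul (hf : ConcaveOn ℝ s f) (hs : IsOpen s) (hx : x ∈ s)
    {z : E} {a : ℝ} (hz : HasDerivAt (fun t : ℝ => f (x + t • z)) a 0) (v : E) (c : ℝ) :
    rightLineDeriv f x (v + c • z) = rightLineDeriv f x v + c * a := by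
  have hsmul (c : ℝ) : rightLineDeriv f x (c • z) = c * a := by
    have h := (hz.comp_of_eq (0 : ℝ) (hasDerivAt_mul_const c) (zero_mul c).symm)
    refine rightLineDeriv_eq_of_hasDerivAt ?_
    simpa [Function.comp_def, smul_smul, mul_comm] using h
  have h1 := hf.rightLineDeriv_add_rightLineDeriv_le hs hx v (c • z)
  have h2 := hf.rightLineDeriv_add_rightLineDeriv_le hs hx (v + c • z) ((-c) • z)
  rw [show v + c • z + (-c) • z = v by module, hsmul] at h2
  rw [hsmul] at h1
  linarith

end LineDeriv

section ConcaveE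

variable {E : Type*} [AddCommGroup E] [Module ℝ E] {u : E → EReal}

lemma ConcaveE.concaveOn_toReal (hu : ConcaveE u) {s : Set E} (hs : Convex ℝ s)
    (hfin : ∀ y ∈ s, ∃ r : ℝ, u y = r) : ConcaveOn ℝ s fun y => (u y).toReal := by
  refine ⟨hs, fun a ha b hb α β hα hβ hαβ => ?_⟩
  obtain rfl : β = 1 - α := by linarith
  obtain ⟨ra, hra⟩ := hfin a ha
  obtain ⟨rb, hrb⟩ := hfin b hb
  obtain ⟨rm, hrm⟩ := hfin _ (hs ha hb hα hβ hαβ)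
  have h := hu a b α hα (by linarith)
  rw [hra, hrb, hrm] at h
  simp only [hra, hrb, hrm, EReal.toReal_coe, smul_eq_mul]
  exact_mod_cast h

lemma ConcaveE.apply_add_smul_le (hu : ConcaveE u) {x v : E} {c : ℝ} (hx : u x = c) {r t : ℝ}
    (hr : 0 < r) (hrt : r ≤ t) (h : u (x + r • v) ≤ u x) : u (x + t • v) ≤ u x := by
  have ht : 0 < t := hr.trans_le hrt
  have hcomb := hu (x + t • v) x (r / t) (by positivity) ((div_le_one ht).2 hrt)
  rw [show (r / t) • (x + t • v) + (1 - r / t) • x = x + (r / t * t) • v by module,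
    div_mul_cancel₀ r ht.ne'] at hcomb
  rw [hx] at hcomb h ⊢
  generalize u (x + t • v) = w at hcomb ⊢
  induction w using EReal.rec with
  | bot => exact bot_le
  | top =>
    rw [EReal.coe_mul_top_of_pos (by positivity), ← EReal.coe_mul, EReal.top_add_coe] at hcomb
    exact absurd (hcomb.trans h) (by simp)
  | coe y =>
    have hcomb' : r / t * y + (1 - r / t) * c ≤ c := by exact_mod_cast hcomb.trans h
    have : r / t * (y - c) ≤ 0 := by linarith
    exact_mod_cast le_of_sub_nonpos (nonpos_of_mul_nonpos_right this (by positivity))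

variable [TopologicalSpace E] [ContinuousAdd E] [ContinuousSMul ℝ E]

lemma ConcaveE.forall_pos_le_iff_rightLineDeriv_nonpos (hu : ConcaveE u) {s : Set E}
    (hs : IsOpen s) (hsc : Convex ℝ s)
    (hfin : ∀ y ∈ s, ∃ r : ℝ, u y = r) {x : E} (hx : x ∈ s) (v : E) :
    (∀ t : ℝ, 0 < t → u (x + t • v) ≤ u x) ↔
      rightLineDeriv (fun y => (u y).toReal) x v ≤ 0 := by
  obtain ⟨c, hc⟩ := hfin x hx
  have hle (y : E) (hy : y ∈ s) : u y ≤ u x ↔ (u y).toReal ≤ (u x).toReal := by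
    obtain ⟨r, hr⟩ := hfin y hy
    simp [hr, hc]
  rw [(hu.concaveOn_toReal hsc hfin).rightLineDeriv_nonpos_iff hs hx]
  refine ⟨fun h t ht hxt => (hle _ hxt).1 (h t ht), fun h t ht => ?_⟩
  obtain ⟨r, ⟨hr, hrt⟩, hxr⟩ := (Eventually.and (Ioc_mem_nhdsGT ht)
    (nhdsWithin_le_nhds (eventually_add_smul_mem hs hx v))).exists
  exact hu.apply_add_smul_le hc hr hrt ((hle _ hxr).2 (h r hr hxr))

end ConcaveE

theorem interval_of_conditional_davis_prices_general
    (u : ℝ × ℝ → EReal)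
    (hconc : ConcaveE u)
    (ε : ℝ) (hε : 0 < ε)
    (hfin : ∀ y ∈ Metric.ball (((0 : ℝ), (0 : ℝ)) : ℝ × ℝ) ε, ∃ r : ℝ, u y = (r : EReal))
    (v : ℝ → ℝ) (hv : ∀ᶠ x in nhds (0 : ℝ), u (0, x) = ((v x : ℝ) : EReal))
    (yB : ℝ) (hyB : 0 < yB) (hderiv : HasDerivAt v yB 0) :
    ∃ Dp Dm : ℝ,
      Tendsto (fun e : ℝ => ((u (e, 0)).toReal - (u (0, 0)).toReal) / e)
        (nhdsWithin 0 (Set.Ioi 0)) (nhds Dp) ∧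
      Tendsto (fun e : ℝ => ((u (e, 0)).toReal - (u (0, 0)).toReal) / e)
        (nhdsWithin 0 (Set.Iio 0)) (nhds Dm) ∧
      Dp ≤ Dm ∧
      {p : ℝ | ∀ e : ℝ, u (e, -(e * p)) ≤ u (0, 0)} = Set.Icc (Dp / yB) (Dm / yB) := by
  set f : ℝ × ℝ → ℝ := fun y => (u y).toReal
  have hopen := Metric.isOpen_ball (x := ((0 : ℝ), (0 : ℝ))) (ε := ε)
  have h0 : ((0 : ℝ), (0 : ℝ)) ∈ Metric.ball ((0 : ℝ), (0 : ℝ)) ε := Metric.mem_ball_self hε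
  have hf : ConcaveOn ℝ (Metric.ball ((0 : ℝ), (0 : ℝ)) ε) f :=
    hconc.concaveOn_toReal (convex_ball _ _) hfin
  set d := rightLineDeriv f (0, 0)
  have hvert : HasDerivAt (fun t : ℝ => f ((0, 0) + t • (0, 1))) yB 0 := by
    refine hderiv.congr_of_eventuallyEq ?_
    filter_upwards [hv] with t ht
    simp [f, ht]
  have hshift (a b : ℝ) : d (a, b) = d (a, 0) + b * yB := by
    simpa using hf.rightLineDeriv_add_smul hopen h0 hvert (a, 0) b
  have hprices (p : ℝ) :
      (∀ e : ℝ, u (e, -(e * p)) ≤ u (0, 0)) ↔ d (1, -p) ≤ 0 ∧ d (-1, p) ≤ 0 := by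
    rw [← hconc.forall_pos_le_iff_rightLineDeriv_nonpos hopen (convex_ball _ _) hfin h0,
      ← hconc.forall_pos_le_iff_rightLineDeriv_nonpos hopen (convex_ball _ _) hfin h0]
    refine ⟨fun h => ⟨fun t _ => by simpa using h t, fun t _ => by simpa using h (-t)⟩, ?_⟩
    rintro ⟨h1, h2⟩ e
    rcases lt_trichotomy e 0 with he | rfl | he
    · simpa using h2 (-e) (neg_pos.2 he)
    · simp
    · simpa using h1 e he
  refine ⟨d (1, 0), -d (-1, 0), ?_, ?_, ?_, ?_⟩
  · simpa using hf.tendsto_rightLineDeriv hopen h0 (1, 0)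
  · simpa using (hf.hasDerivWithinAt_neg_rightLineDeriv_neg hopen h0 (1, 0)).tendsto_sub_div
      self_notMem_Iio
  · have hsum : d (1, 0) + d (-1, 0) ≤ d (0, 0) := by
      simpa using hf.rightLineDeriv_add_rightLineDeriv_le hopen h0 (1, 0) (-1, 0)
    have hd0 : d (0, 0) = 0 := rightLineDeriv_zero f _
    linarith
  · ext p
    rw [Set.mem_ofPred_eq, hprices, hshift 1, hshift (-1), Set.mem_Icc, div_le_iff₀ hyB,
      le_div_iff₀ hyB]
    constructor <;> rintro ⟨h1, h2⟩ <;> constructor <;> linarith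

theorem interval_of_conditional_davis_prices
    (u : ℝ × ℝ → EReal)
    (hconc : ConcaveE u)
    (hntop : ∀ y, u y ≠ ⊤)
    (ε : ℝ) (hε : 0 < ε)
    (hfin : ∀ y ∈ Metric.ball (((0 : ℝ), (0 : ℝ)) : ℝ × ℝ) ε, ∃ r : ℝ, u y = (r : EReal))
    (v : ℝ → ℝ) (hv : ∀ᶠ x in nhds (0 : ℝ), u (0, x) = ((v x : ℝ) : EReal))
    (yB : ℝ) (hyB : 0 < yB) (hderiv : HasDerivAt v yB 0) :
    ∃ Dp Dm : ℝ,
      Tendsto (fun e : ℝ => ((u (e, 0)).toReal - (u (0, 0)).toReal) / e)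
        (nhdsWithin 0 (Set.Ioi 0)) (nhds Dp) ∧
      Tendsto (fun e : ℝ => ((u (e, 0)).toReal - (u (0, 0)).toReal) / e)
        (nhdsWithin 0 (Set.Iio 0)) (nhds Dm) ∧
      Dp ≤ Dm ∧
      {p : ℝ | ∀ e : ℝ, u (e, -(e * p)) ≤ u (0, 0)} = Set.Icc (Dp / yB) (Dm / yB) :=
  interval_of_conditional_davis_prices_general u hconc ε hε hfin v hv yB hyB hderiv
end

section
/- Let ΔS : Fin 3 → ℝ be given by ΔS = (1, 0, −1), and let G := { g : Fin 3 → ℝ : ∃ x π : ℝ, x ≥ 0 ∧ −1 − x ≤ π ≤ 1 + x ∧ g = (fun i => x + π·ΔS i) }. Then G has no smallest element with respect to the pointwise order: there is no g ∈ G such that g i ≤ h i for every h ∈ G and every i ∈ Fin 3. -/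
theorem no_smallest_superreplicating_outcome :
    ¬ ∃ g ∈ {g : Fin 3 → ℝ | ∃ x π : ℝ, 0 ≤ x ∧ -1 - x ≤ π ∧ π ≤ 1 + x ∧
        g = fun i => x + π * (![1, 0, -1] : Fin 3 → ℝ) i},
      ∀ h ∈ {g : Fin 3 → ℝ | ∃ x π : ℝ, 0 ≤ x ∧ -1 - x ≤ π ∧ π ≤ 1 + x ∧
        g = fun i => x + π * (![1, 0, -1] : Fin 3 → ℝ) i},
      ∀ i : Fin 3, g i ≤ h i := by
  rintro ⟨g, ⟨x, π, hx, hπ1, hπ2, rfl⟩, hmin⟩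
  have h1 := hmin (fun i => 0 + (-1) * (![1, 0, -1] : Fin 3 → ℝ) i)
      ⟨0, -1, by norm_num⟩
  have h2 := hmin (fun i => 0 + 1 * (![1, 0, -1] : Fin 3 → ℝ) i)
      ⟨0, 1, by norm_num⟩
  have a0 := h1 0
  have a2 := h2 2
  simp [Matrix.cons_val_zero] at a0 a2
  linarith
end
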